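/- Let d ∈ ℕ. For all vectors x, y ∈ ℝᵈ, ⟨log(e + |x|²)|x|²x − log(e + |y|²)|y|²y, x − y⟩ ≥ 0, where ⟨·,·⟩ denotes the Euclidean inner product and |·| the Euclidean norm. -/

import Mathlib

/-!
By Cauchy–Schwarz, `⟪φ ‖x‖ • x - φ ‖y‖ • y, x - y⟫ ≥ (φ ‖x‖ * ‖x‖ - φ ‖y‖ * ‖y‖) * (‖x‖ - ‖y‖)`
for every `φ ≥ 0`, and the right side is nonnegative as soon as `t ↦ φ t * t` is monotone.
Here `φ t = log (e + t²) * t²`, and `t ↦ log (e + t²) * t³` is a product of nonnegative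
monotone functions on `[0, ∞)`.
-/

open Real

theorem inner_smul_norm_sub_smul_norm_nonneg {E : Type*} [NormedAddCommGroup E]
    [InnerProductSpace ℝ E] {φ : ℝ → ℝ} (hφ : ∀ t, 0 ≤ t → 0 ≤ φ t)
    (hmono : MonotoneOn (fun t ↦ φ t * t) (Set.Ici 0)) (x y : E) :
    0 ≤ inner ℝ (φ ‖x‖ • x - φ ‖y‖ • y) (x - y) := by
  have hx : 0 ≤ φ ‖x‖ := hφ _ (norm_nonneg x)
  have hy : 0 ≤ φ ‖y‖ := hφ _ (norm_nonneg y)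
  have hcs : inner ℝ x y ≤ ‖x‖ * ‖y‖ := real_inner_le_norm x y
  have hmv : 0 ≤ (φ ‖y‖ * ‖y‖ - φ ‖x‖ * ‖x‖) * (‖y‖ - ‖x‖) :=
    (monovaryOn_id_iff.2 hmono).sub_mul_sub_nonneg (norm_nonneg x) (norm_nonneg y)
  have hexpand : inner ℝ (φ ‖x‖ • x - φ ‖y‖ • y) (x - y)
      = φ ‖x‖ * ‖x‖ ^ 2 + φ ‖y‖ * ‖y‖ ^ 2 - (φ ‖x‖ + φ ‖y‖) * inner ℝ x y := by
    simp only [inner_sub_left, inner_sub_right, real_inner_smul_left,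
      real_inner_self_eq_norm_sq, real_inner_comm x y]
    ring
  calc 0 ≤ (φ ‖y‖ * ‖y‖ - φ ‖x‖ * ‖x‖) * (‖y‖ - ‖x‖) := hmv
    _ = φ ‖x‖ * ‖x‖ ^ 2 + φ ‖y‖ * ‖y‖ ^ 2 - (φ ‖x‖ + φ ‖y‖) * (‖x‖ * ‖y‖) := by ring
    _ ≤ _ := by rw [hexpand]; gcongr

theorem one_le_log_exp_one_add_sq (t : ℝ) : 1 ≤ log (exp 1 + t ^ 2) := by
  calc (1 : ℝ) = log (exp 1) := (log_exp 1).symm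
    _ ≤ log (exp 1 + t ^ 2) := log_le_log (exp_pos 1) (by nlinarith [sq_nonneg t])

theorem monotoneOn_log_exp_one_add_sq_mul_sq_mul :
    MonotoneOn (fun t : ℝ ↦ log (exp 1 + t ^ 2) * t ^ 2 * t) (Set.Ici 0) := by
  have hlog : MonotoneOn (fun t : ℝ ↦ log (exp 1 + t ^ 2)) (Set.Ici 0) := fun a ha b _ hab ↦
    log_le_log (by positivity) (by gcongr)
  have hcube : MonotoneOn (fun t : ℝ ↦ t ^ 2 * t) (Set.Ici 0) := fun a ha b _ hab ↦ by
    simp only [Set.mem_Ici] at ha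
    dsimp only
    gcongr
  have := hlog.mul hcube (fun t _ ↦ zero_le_one.trans (one_le_log_exp_one_add_sq t))
    (fun t ht ↦ by simp only [Set.mem_Ici] at ht; positivity)
  simpa only [Pi.mul_def, mul_assoc] using this

theorem log_damping_monotone (d : ℕ) (x y : EuclideanSpace ℝ (Fin d)) :
    0 ≤ @inner ℝ _ _
      ((Real.log (Real.exp 1 + ‖x‖ ^ 2) * ‖x‖ ^ 2) • x
        - (Real.log (Real.exp 1 + ‖y‖ ^ 2) * ‖y‖ ^ 2) • y) (x - y) :=
  inner_smul_norm_sub_smul_norm_nonneg (φ := fun t ↦ log (exp 1 + t ^ 2) * t ^ 2)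
    (fun t _ ↦ mul_nonneg (zero_le_one.trans (one_le_log_exp_one_add_sq t)) (sq_nonneg t))
    monotoneOn_log_exp_one_add_sq_mul_sq_mul x y
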